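/- For bounded linear operators X, Y on a complex Hilbert space H and t ∈ [0,1], the weighted numerical radius of the operator matrix [[X, Y], [Y, X]] equals max{w_t(X + Y), w_t(X - Y)}. -/

import Mathlib

open ContinuousLinearMap in
noncomputable def nr {H : Type*} [NormedAddCommGroup H] [InnerProductSpace ℂ H]
    (T : H →L[ℂ] H) : ℝ :=
  ⨆ x : {x : H // ‖x‖ = 1}, ‖(inner ℂ (T x) (x : H) : ℂ)‖

open ContinuousLinearMap in
noncomputable def wnr {H : Type*} [NormedAddCommGroup H] [InnerProductSpace ℂ H]
    [CompleteSpace H] (t : ℝ) (T : H →L[ℂ] H) : ℝ :=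
  nr ((1 - 2*t) • adjoint T + T)

/-- The 2×2 block operator matrix [[A, B], [C, D]] acting on the Hilbert space H ⊕ H. -/
noncomputable def blk {H : Type*} [NormedAddCommGroup H] [InnerProductSpace ℂ H]
    (A B C D : H →L[ℂ] H) : WithLp 2 (H × H) →L[ℂ] WithLp 2 (H × H) :=
  (((WithLp.prodContinuousLinearEquiv 2 ℂ H H).symm :
      (H × H) →L[ℂ] WithLp 2 (H × H)).comp
    (((A.coprod B).prod (C.coprod D)).comp
      ((WithLp.prodContinuousLinearEquiv 2 ℂ H H : WithLp 2 (H × H) ≃L[ℂ] (H × H)) :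
        WithLp 2 (H × H) →L[ℂ] (H × H))))

open ContinuousLinearMap

variable {H : Type*} [NormedAddCommGroup H] [InnerProductSpace ℂ H] [CompleteSpace H]

/-! Conjugation by the unitary `(1/√2) [[I, I], [I, -I]]` turns `S = [[A, B], [B, A]]` into
`diag(A + B, A - B)`, whose numerical radius is the larger of the two diagonal ones. Without square
roots: for `x = (u, v)`, `2 ⟪S x, x⟫ = ⟪(A + B)(u + v), u + v⟫ + ⟪(A - B)(u - v), u - v⟫` and
`‖u + v‖² + ‖u - v‖² = 2 ‖x‖²` by the parallelogram law. Since `T ↦ (1 - 2t) T* + T` preserves the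
symmetric block shape and commutes with `A, B ↦ A ± B`, the weighted radius follows. -/

section NumericalRadius

variable {E : Type*} [NormedAddCommGroup E] [InnerProductSpace ℂ E]

lemma nr_bddAbove (T : E →L[ℂ] E) :
    BddAbove (Set.range fun x : {x : E // ‖x‖ = 1} => ‖(inner ℂ (T x) (x : E) : ℂ)‖) := by
  refine ⟨‖T‖, ?_⟩
  rintro r ⟨⟨x, hx⟩, rfl⟩
  calc ‖(inner ℂ (T x) x : ℂ)‖ ≤ ‖T x‖ * ‖x‖ := norm_inner_le_norm _ _
    _ ≤ ‖T‖ * ‖x‖ * ‖x‖ := by gcongr; exact T.le_opNorm x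
    _ = ‖T‖ := by rw [hx]; ring

lemma nr_nonneg (T : E →L[ℂ] E) : 0 ≤ nr T :=
  Real.iSup_nonneg fun _ => norm_nonneg _

lemma norm_inner_le_nr_mul (T : E →L[ℂ] E) (x : E) :
    ‖(inner ℂ (T x) x : ℂ)‖ ≤ nr T * ‖x‖ ^ 2 := by
  rcases eq_or_ne x 0 with rfl | hx
  · simp
  have hunit : ‖x‖⁻¹ * (‖(inner ℂ (T x) x : ℂ)‖ * ‖x‖⁻¹) ≤ nr T := by
    simpa [nr, inner_smul_left, inner_smul_right, norm_mul] using
      le_ciSup (nr_bddAbove T) ⟨_, norm_smul_inv_norm (𝕜 := ℂ) hx⟩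
  have hpos : 0 < ‖x‖ := norm_pos_iff.2 hx
  calc ‖(inner ℂ (T x) x : ℂ)‖ = ‖x‖⁻¹ * (‖(inner ℂ (T x) x : ℂ)‖ * ‖x‖⁻¹) * ‖x‖ ^ 2 := by
        field_simp
    _ ≤ nr T * ‖x‖ ^ 2 := by gcongr

lemma nr_le_of_norm_inner_le (T : E →L[ℂ] E) {M : ℝ} (hM : 0 ≤ M)
    (h : ∀ x, ‖(inner ℂ (T x) x : ℂ)‖ ≤ M * ‖x‖ ^ 2) : nr T ≤ M :=
  Real.iSup_le (fun x => by simpa [x.2] using h x) hM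

end NumericalRadius

section BlockMatrix

variable {E : Type*} [NormedAddCommGroup E] [InnerProductSpace ℂ E]

@[simp] lemma blk_apply_fst (A B C D : E →L[ℂ] E) (x : WithLp 2 (E × E)) :
    (blk A B C D x).fst = A x.fst + B x.snd := rfl

@[simp] lemma blk_apply_snd (A B C D : E →L[ℂ] E) (x : WithLp 2 (E × E)) :
    (blk A B C D x).snd = C x.fst + D x.snd := rfl

lemma inner_blk_self (A B C D : E →L[ℂ] E) (x : WithLp 2 (E × E)) :
    (inner ℂ (blk A B C D x) x : ℂ)
      = inner ℂ (A x.fst + B x.snd) x.fst + inner ℂ (C x.fst + D x.snd) x.snd :=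
  WithLp.prod_inner_apply _ _

lemma two_mul_inner_blk_symm_self (A B : E →L[ℂ] E) (x : WithLp 2 (E × E)) :
    2 * (inner ℂ (blk A B B A x) x : ℂ)
      = inner ℂ ((A + B) (x.fst + x.snd)) (x.fst + x.snd)
        + inner ℂ ((A - B) (x.fst - x.snd)) (x.fst - x.snd) := by
  simp only [inner_blk_self, add_apply, sub_apply, map_add, map_sub, inner_add_left,
    inner_add_right, inner_sub_left, inner_sub_right]
  ring

lemma inner_blk_symm_diag (A B : E →L[ℂ] E) (z : E) :
    (inner ℂ (blk A B B A (WithLp.toLp 2 (z, z))) (WithLp.toLp 2 (z, z)) : ℂ)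
      = 2 * inner ℂ ((A + B) z) z := by
  simp only [inner_blk_self, WithLp.toLp_fst, WithLp.toLp_snd, add_apply, inner_add_left]
  ring

lemma inner_blk_symm_antidiag (A B : E →L[ℂ] E) (z : E) :
    (inner ℂ (blk A B B A (WithLp.toLp 2 (z, -z))) (WithLp.toLp 2 (z, -z)) : ℂ)
      = 2 * inner ℂ ((A - B) z) z := by
  simp only [inner_blk_self, WithLp.toLp_fst, WithLp.toLp_snd, sub_apply, map_neg,
    inner_add_left, inner_sub_left, inner_neg_left, inner_neg_right]
  ring

lemma nr_blk_symm (A B : E →L[ℂ] E) :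
    nr (blk A B B A) = max (nr (A + B)) (nr (A - B)) := by
  set M := max (nr (A + B)) (nr (A - B))
  apply le_antisymm
  · refine nr_le_of_norm_inner_le _ ((nr_nonneg _).trans (le_max_left _ _)) fun x => ?_
    set u := x.fst + x.snd
    set v := x.fst - x.snd
    have hpar : ‖u‖ ^ 2 + ‖v‖ ^ 2 = 2 * ‖x‖ ^ 2 := by
      rw [parallelogram_law_with_norm ℂ, WithLp.prod_norm_sq_eq_of_L2]
    have h2 : 2 * ‖(inner ℂ (blk A B B A x) x : ℂ)‖ ≤ M * (2 * ‖x‖ ^ 2) := by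
      calc 2 * ‖(inner ℂ (blk A B B A x) x : ℂ)‖
          = ‖(inner ℂ ((A + B) u) u : ℂ) + inner ℂ ((A - B) v) v‖ := by
            rw [← two_mul_inner_blk_symm_self, norm_mul, Complex.norm_two]
        _ ≤ ‖(inner ℂ ((A + B) u) u : ℂ)‖ + ‖(inner ℂ ((A - B) v) v : ℂ)‖ := norm_add_le _ _
        _ ≤ nr (A + B) * ‖u‖ ^ 2 + nr (A - B) * ‖v‖ ^ 2 :=
            add_le_add (norm_inner_le_nr_mul _ _) (norm_inner_le_nr_mul _ _)
        _ ≤ M * ‖u‖ ^ 2 + M * ‖v‖ ^ 2 := by gcongr <;> simp [M]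
        _ = M * (2 * ‖x‖ ^ 2) := by rw [← mul_add, hpar]
    linarith
  · apply max_le
    · refine nr_le_of_norm_inner_le _ (nr_nonneg _) fun z => ?_
      have h := norm_inner_le_nr_mul (blk A B B A) (WithLp.toLp 2 (z, z))
      rw [inner_blk_symm_diag, norm_mul, Complex.norm_two, WithLp.prod_norm_sq_eq_of_L2,
        WithLp.toLp_fst, WithLp.toLp_snd] at h
      linarith
    · refine nr_le_of_norm_inner_le _ (nr_nonneg _) fun z => ?_
      have h := norm_inner_le_nr_mul (blk A B B A) (WithLp.toLp 2 (z, -z))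
      rw [inner_blk_symm_antidiag, norm_mul, Complex.norm_two, WithLp.prod_norm_sq_eq_of_L2,
        WithLp.toLp_fst, WithLp.toLp_snd, norm_neg] at h
      linarith

lemma smul_blk_add_blk (r : ℝ) (A B C D A' B' C' D' : E →L[ℂ] E) :
    r • blk A B C D + blk A' B' C' D'
      = blk (r • A + A') (r • B + B') (r • C + C') (r • D + D') := by
  ext x : 1
  refine (WithLp.ext_iff _).2 (Prod.ext ?_ ?_)
  · simp only [add_apply, smul_apply, WithLp.ofLp_fst, WithLp.add_fst, WithLp.smul_fst,
      blk_apply_fst, smul_add]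
    abel
  · simp only [add_apply, smul_apply, WithLp.ofLp_snd, WithLp.add_snd, WithLp.smul_snd,
      blk_apply_snd, smul_add]
    abel

lemma adjoint_blk [CompleteSpace E] (A B C D : E →L[ℂ] E) :
    adjoint (blk A B C D) = blk (adjoint A) (adjoint C) (adjoint B) (adjoint D) := by
  refine (eq_adjoint_iff _ _).2 (fun x y => ?_) |>.symm
  simp only [WithLp.prod_inner_apply, WithLp.ofLp_fst, WithLp.ofLp_snd, blk_apply_fst,
    blk_apply_snd, inner_add_left, inner_add_right, adjoint_inner_left]
  ring

end BlockMatrix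

theorem stmt7_general (t : ℝ) (X Y : H →L[ℂ] H) :
    wnr t (blk X Y Y X) = max (wnr t (X + Y)) (wnr t (X - Y)) := by
  have hblk : (1 - 2*t) • adjoint (blk X Y Y X) + blk X Y Y X
      = blk ((1 - 2*t) • adjoint X + X) ((1 - 2*t) • adjoint Y + Y)
          ((1 - 2*t) • adjoint Y + Y) ((1 - 2*t) • adjoint X + X) := by
    rw [adjoint_blk, smul_blk_add_blk]
  rw [wnr, hblk, nr_blk_symm, wnr, wnr, map_add, map_sub, smul_add, smul_sub]
  congr 2 <;> abel

theorem stmt7 (t : ℝ) (ht : t ∈ Set.Icc (0:ℝ) 1) (X Y : H →L[ℂ] H) :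
    wnr t (blk X Y Y X) = max (wnr t (X + Y)) (wnr t (X - Y)) :=
  stmt7_general t X Y
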